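/- (Borges–Lomp) Let ∂ be a locally nilpotent derivation of an algebra A over a commutative ring R. Then the ring of constants A^∂ = ker(∂) is a left Ore domain if and only if A^∂ is a domain and A is a uniform left A[x;∂]-module, i.e., any two nonzero ∂-stable left ideals of A have nonzero intersection. -/

import Mathlib

/-!
Every nonzero `∂`-stable left ideal contains a nonzero constant: apply `∂` to a nonzero element
until the next application would kill it. Hence, in one direction, Ore multiples of constants
chosen in `I` and `J` lie in `I ⊓ J`. Conversely, `Aa` and `Ab` are `∂`-stable for constants
`a, b`, so `Aa ∩ Ab` contains a nonzero constant `z = ua = vb`; the factors `u, v` are then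
constants, since otherwise some nonzero constant `∂ᵏu` would satisfy `∂ᵏu · a = 0`.
-/

theorem Module.End.exists_pow_apply_ne_zero_and_apply_eq_zero {R M : Type*} [Semiring R]
    [AddCommMonoid M] [Module R M] (f : M →ₗ[R] M) {a : M} (ha : a ≠ 0) {n : ℕ}
    (hn : (f ^ n) a = 0) : ∃ k : ℕ, (f ^ k) a ≠ 0 ∧ f ((f ^ k) a) = 0 := by
  induction n with
  | zero => exact absurd hn (by simpa using ha)
  | succ n ih =>
    by_cases hn' : (f ^ n) a = 0
    · exact ih hn'
    · exact ⟨n, hn', by rwa [pow_succ', Module.End.mul_apply] at hn⟩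

section Derivation

variable {R A : Type*} [CommRing R] [Ring A] [Algebra R A] {d : A →ₗ[R] A}

theorem exists_mem_ne_zero_apply_eq_zero (hln : ∀ a : A, ∃ n : ℕ, (d ^ n) a = 0)
    {I : Ideal A} (hI : ∀ v ∈ I, d v ∈ I) (hI0 : I ≠ ⊥) : ∃ z ∈ I, z ≠ 0 ∧ d z = 0 := by
  obtain ⟨a, haI, ha0⟩ := Submodule.exists_mem_ne_zero_of_ne_bot hI0
  obtain ⟨n, hn⟩ := hln a
  obtain ⟨k, hk0, hdk⟩ := Module.End.exists_pow_apply_ne_zero_and_apply_eq_zero d ha0 hn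
  exact ⟨(d ^ k) a, Module.End.pow_apply_mem_of_forall_mem (p := I.restrictScalars R) k hI a haI,
    hk0, hdk⟩

theorem pow_apply_mul_of_apply_eq_zero (hleib : ∀ a b : A, d (a * b) = d a * b + a * d b)
    {a : A} (ha : d a = 0) (k : ℕ) (v : A) : (d ^ k) (v * a) = (d ^ k) v * a := by
  induction k with
  | zero => rfl
  | succ k ih => rw [pow_succ', Module.End.mul_apply, Module.End.mul_apply, ih, hleib, ha,
      mul_zero, add_zero]

theorem apply_eq_zero_of_apply_mul_eq_zero (hleib : ∀ a b : A, d (a * b) = d a * b + a * d b)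
    (hln : ∀ a : A, ∃ n : ℕ, (d ^ n) a = 0)
    (hdom : ∀ x y : A, d x = 0 → d y = 0 → x * y = 0 → x = 0 ∨ y = 0)
    {a u : A} (ha : d a = 0) (ha0 : a ≠ 0) (hua : d (u * a) = 0) : d u = 0 := by
  by_contra hu
  obtain ⟨n, hn⟩ := hln (d u)
  obtain ⟨k, hk0, hdk⟩ := Module.End.exists_pow_apply_ne_zero_and_apply_eq_zero d hu hn
  have hda : d u * a = d (u * a) := by rw [hleib, ha, mul_zero, add_zero]
  have hka : (d ^ k) (d u) * a = 0 := by
    rw [← pow_apply_mul_of_apply_eq_zero hleib ha, hda, hua, map_zero]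
  exact (hdom _ _ hdk ha hka).elim hk0 ha0

theorem apply_mem_span_singleton_of_apply_eq_zero
    (hleib : ∀ a b : A, d (a * b) = d a * b + a * d b) {c : A} (hc : d c = 0) :
    ∀ v ∈ Ideal.span {c}, d v ∈ Ideal.span {c} := by
  intro v hv
  obtain ⟨w, rfl⟩ := Ideal.mem_span_singleton'.mp hv
  rw [hleib, hc, mul_zero, add_zero]
  exact Ideal.mul_mem_left _ _ (Ideal.mem_span_singleton_self c)

theorem inf_ne_bot_of_leftOre (hln : ∀ a : A, ∃ n : ℕ, (d ^ n) a = 0)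
    (hore : ∀ a b : A, d a = 0 → d b = 0 → a ≠ 0 → b ≠ 0 →
      ∃ x y : A, d x = 0 ∧ d y = 0 ∧ x * a = y * b ∧ x * a ≠ 0)
    {I J : Ideal A} (hI : ∀ v ∈ I, d v ∈ I) (hJ : ∀ v ∈ J, d v ∈ J) (hI0 : I ≠ ⊥)
    (hJ0 : J ≠ ⊥) : I ⊓ J ≠ ⊥ := by
  obtain ⟨a, haI, ha0, hda⟩ := exists_mem_ne_zero_apply_eq_zero hln hI hI0
  obtain ⟨b, hbJ, hb0, hdb⟩ := exists_mem_ne_zero_apply_eq_zero hln hJ hJ0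
  obtain ⟨x, y, -, -, hxy, hne⟩ := hore a b hda hdb ha0 hb0
  have hmem : x * a ∈ I ⊓ J := ⟨I.mul_mem_left x haI, hxy ▸ J.mul_mem_left y hbJ⟩
  exact Submodule.ne_bot_iff _ |>.mpr ⟨_, hmem, hne⟩

theorem leftOre_of_inf_ne_bot (hleib : ∀ a b : A, d (a * b) = d a * b + a * d b)
    (hln : ∀ a : A, ∃ n : ℕ, (d ^ n) a = 0)
    (hdom : ∀ x y : A, d x = 0 → d y = 0 → x * y = 0 → x = 0 ∨ y = 0)
    (huni : ∀ I J : Ideal A, (∀ v ∈ I, d v ∈ I) → (∀ v ∈ J, d v ∈ J) →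
      I ≠ ⊥ → J ≠ ⊥ → I ⊓ J ≠ ⊥)
    {a b : A} (ha : d a = 0) (hb : d b = 0) (ha0 : a ≠ 0) (hb0 : b ≠ 0) :
    ∃ x y : A, d x = 0 ∧ d y = 0 ∧ x * a = y * b ∧ x * a ≠ 0 := by
  have hIa := apply_mem_span_singleton_of_apply_eq_zero hleib ha
  have hIb := apply_mem_span_singleton_of_apply_eq_zero hleib hb
  have hinf := huni _ _ hIa hIb (by rwa [Ne, Ideal.span_singleton_eq_bot])
    (by rwa [Ne, Ideal.span_singleton_eq_bot])
  obtain ⟨z, ⟨hza, hzb⟩, hz0, hdz⟩ := exists_mem_ne_zero_apply_eq_zero hln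
    (fun v hv => Submodule.mem_inf.mpr ⟨hIa v hv.1, hIb v hv.2⟩) hinf
  obtain ⟨x, rfl⟩ := Ideal.mem_span_singleton'.mp hza
  obtain ⟨y, hy⟩ := Ideal.mem_span_singleton'.mp hzb
  exact ⟨x, y, apply_eq_zero_of_apply_mul_eq_zero hleib hln hdom ha ha0 hdz,
    apply_eq_zero_of_apply_mul_eq_zero hleib hln hdom hb hb0 (hy ▸ hdz), hy.symm, hz0⟩

end Derivation

/-- Borges–Lomp: for a locally nilpotent derivation `∂` of an `R`-algebra `A`, the ring of
constants `A^∂ = ker ∂` is a left Ore domain iff `A^∂` is a domain and `A` is a uniform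
left `A[x;∂]`-module (any two nonzero `∂`-stable left ideals of `A` intersect
nontrivially). -/
theorem constants_leftOre_iff_uniform {R A : Type*} [CommRing R] [Ring A] [Algebra R A]
    (d : A →ₗ[R] A)
    (hleib : ∀ a b : A, d (a * b) = d a * b + a * d b)
    (hln : ∀ a : A, ∃ n : ℕ, (d ^ n) a = 0) :
    (((1 : A) ≠ 0 ∧ ∀ x y : A, d x = 0 → d y = 0 → x * y = 0 → x = 0 ∨ y = 0) ∧
      ∀ a b : A, d a = 0 → d b = 0 → a ≠ 0 → b ≠ 0 →
        ∃ x y : A, d x = 0 ∧ d y = 0 ∧ x * a = y * b ∧ x * a ≠ 0) ↔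
    (((1 : A) ≠ 0 ∧ ∀ x y : A, d x = 0 → d y = 0 → x * y = 0 → x = 0 ∨ y = 0) ∧
      ∀ I J : Ideal A, (∀ v ∈ I, d v ∈ I) → (∀ v ∈ J, d v ∈ J) →
        I ≠ ⊥ → J ≠ ⊥ → I ⊓ J ≠ ⊥) :=
  ⟨fun ⟨hdom, hore⟩ => ⟨hdom, fun _ _ hI hJ hI0 hJ0 =>
      inf_ne_bot_of_leftOre hln hore hI hJ hI0 hJ0⟩,
    fun ⟨hdom, huni⟩ => ⟨hdom, fun _ _ ha hb ha0 hb0 =>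
      leftOre_of_inf_ne_bot hleib hln hdom.2 huni ha hb ha0 hb0⟩⟩
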